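/- arXiv:2402.07194 — 5 statements merged into one kernel-verified Lean document; each statement's English description precedes it below -/
import Mathlib

section
/- Let G and H be simple graphs, each with at least two vertices. Then the modular product G⋄H contains no pair of distinct false twins; that is, there do not exist distinct vertices (g,h) and (g',h') of G⋄H whose open neighborhoods in G⋄H are equal. -/
open SimpleGraph

/-- The closed neighborhood `N[v]` of a vertex. -/
def closedNbr {α : Type*} (G : SimpleGraph α) (v : α) : Set α :=
  insert v (G.neighborSet v)

/-- The modular product `G ⋄ H`. -/
def modularProduct {α β : Type*} (G : SimpleGraph α) (H : SimpleGraph β) :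
    SimpleGraph (α × β) :=
  SimpleGraph.fromRel (fun x y =>
    (x.1 = y.1 ∧ H.Adj x.2 y.2) ∨
    (G.Adj x.1 y.1 ∧ x.2 = y.2) ∨
    (G.Adj x.1 y.1 ∧ H.Adj x.2 y.2) ∨
    (x.1 ≠ y.1 ∧ x.2 ≠ y.2 ∧ ¬ G.Adj x.1 y.1 ∧ ¬ H.Adj x.2 y.2))

/-- `{g, g'}` is a `γ_G`-pair: the closed neighborhoods are disjoint and cover `V(G)`. -/
def gammaPair {α : Type*} (G : SimpleGraph α) (g g' : α) : Prop :=
  closedNbr G g ∩ closedNbr G g' = ∅ ∧ closedNbr G g ∪ closedNbr G g' = Set.univ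

/-- A universal vertex. -/
def IsUniversal {α : Type*} (G : SimpleGraph α) (v : α) : Prop :=
  closedNbr G v = Set.univ

/-- A complete graph: every two distinct vertices are adjacent. -/
def IsCompleteGraph {α : Type*} (G : SimpleGraph α) : Prop :=
  ∀ u v : α, u ≠ v → G.Adj u v

/-- `G` is a disjoint union of two cliques. -/
def TwoCliques {α : Type*} (G : SimpleGraph α) : Prop :=
  ∃ A B : Set α, A.Nonempty ∧ B.Nonempty ∧ A ∪ B = Set.univ ∧ A ∩ B = ∅ ∧
    (∀ u ∈ A, ∀ v ∈ A, u ≠ v → G.Adj u v) ∧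
    (∀ u ∈ B, ∀ v ∈ B, u ≠ v → G.Adj u v) ∧
    (∀ u ∈ A, ∀ v ∈ B, ¬ G.Adj u v)

/-- `u` and `v` are mutually maximally distant in `X`. -/
def MMD {α : Type*} (X : SimpleGraph α) (u v : α) : Prop :=
  (∀ w, X.Adj u w → X.edist w v ≤ X.edist u v) ∧
  (∀ w, X.Adj v w → X.edist w u ≤ X.edist u v)

/-- A strong resolving set of `X`. -/
def IsStrongResolvingSet {α : Type*} (X : SimpleGraph α) (S : Set α) : Prop :=
  ∀ u v : α, u ≠ v → ∃ w ∈ S,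
    X.dist u w = X.dist u v + X.dist v w ∨ X.dist v w = X.dist v u + X.dist u w

/-- The strong metric dimension of `X`. -/
noncomputable def sdim {α : Type*} (X : SimpleGraph α) : ℕ :=
  sInf {n | ∃ S : Set α, S.ncard = n ∧ IsStrongResolvingSet X S}

/-- The star `K_{1,n}`: the center is `none`, the leaves are `some i`. -/
def starGraph (n : ℕ) : SimpleGraph (Option (Fin n)) :=
  SimpleGraph.fromRel (fun u v => u = none ∧ v ≠ none)

/-- The vertex cover number `β(X)`. -/
noncomputable def vertexCoverNumber {γ : Type*} (X : SimpleGraph γ) : ℕ :=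
  sInf {n | ∃ C : Set γ, C.ncard = n ∧ ∀ u v, X.Adj u v → u ∈ C ∨ v ∈ C}

/-!
Two distinct vertices with the same open neighbourhood cannot be adjacent. Adjacency of distinct
vertices of `G ⋄ H` says that the coordinates are equal-or-adjacent in both factors or in neither,
so the coordinates of non-adjacent twins `(g, h)`, `(g', h')` disagree on this. A vertex sharing a
coordinate with each of them, `(g, h')` (or `(g'', h)` with `g'' ≠ g` when `g = g'`), then sees the
disagreement and is adjacent to exactly one of the two.
-/

lemma not_adj_of_neighborSet_eq {V : Type*} {X : SimpleGraph V} {x y : V}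
    (hN : X.neighborSet x = X.neighborSet y) : ¬ X.Adj x y := fun hxy =>
  X.irrefl (show y ∈ X.neighborSet y from hN ▸ hxy)

lemma neighborSet_ne_of_adj_iff_not_adj {V : Type*} {X : SimpleGraph V} {x y z : V}
    (hz : X.Adj x z ↔ ¬ X.Adj y z) : X.neighborSet x ≠ X.neighborSet y := by
  intro hN
  have : X.Adj x z ↔ X.Adj y z := by rw [← mem_neighborSet, hN, mem_neighborSet]
  tauto

section

variable {α β : Type*} {G : SimpleGraph α} {H : SimpleGraph β}

lemma mem_closedNbr {a b : α} : b ∈ closedNbr G a ↔ b = a ∨ G.Adj a b :=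
  Set.mem_insert_iff

lemma modularProduct_adj_iff {x y : α × β} :
    (modularProduct G H).Adj x y ↔
      x ≠ y ∧ (y.1 ∈ closedNbr G x.1 ↔ y.2 ∈ closedNbr H x.2) := by
  obtain ⟨g, h⟩ := x
  obtain ⟨g', h'⟩ := y
  simp only [modularProduct, fromRel_adj, mem_closedNbr, ne_eq, Prod.mk.injEq]
  by_cases hg : g = g' <;> by_cases hh : h = h'
  all_goals
    subst_vars
    simp only [G.adj_comm g', H.adj_comm h', G.irrefl, H.irrefl]
    tauto

lemma modularProduct_neighborSet_ne_of_ne_of_ne {g g' : α} {h h' : β}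
    (hg : g ≠ g') (hh : h ≠ h') :
    (modularProduct G H).neighborSet (g, h) ≠ (modularProduct G H).neighborSet (g', h') := by
  intro hN
  have hxy := not_adj_of_neighborSet_eq hN
  refine neighborSet_ne_of_adj_iff_not_adj (z := (g, h')) ?_ hN
  simp only [modularProduct_adj_iff, mem_closedNbr, ne_eq, Prod.mk.injEq, G.adj_comm g'] at hxy ⊢
  tauto

lemma modularProduct_neighborSet_ne_of_snd_ne [Nontrivial α] (g : α) {h h' : β} (hh : h ≠ h') :
    (modularProduct G H).neighborSet (g, h) ≠ (modularProduct G H).neighborSet (g, h') := by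
  intro hN
  have hxy := not_adj_of_neighborSet_eq hN
  obtain ⟨g'', hg''⟩ := exists_ne g
  refine neighborSet_ne_of_adj_iff_not_adj (z := (g'', h)) ?_ hN
  simp only [modularProduct_adj_iff, mem_closedNbr, ne_eq, Prod.mk.injEq, H.adj_comm h'] at hxy ⊢
  tauto

lemma modularProduct_neighborSet_ne_of_fst_ne [Nontrivial β] {g g' : α} (hg : g ≠ g') (h : β) :
    (modularProduct G H).neighborSet (g, h) ≠ (modularProduct G H).neighborSet (g', h) := by
  intro hN
  have hxy := not_adj_of_neighborSet_eq hN
  obtain ⟨h'', hh''⟩ := exists_ne h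
  refine neighborSet_ne_of_adj_iff_not_adj (z := (g, h'')) ?_ hN
  simp only [modularProduct_adj_iff, mem_closedNbr, ne_eq, Prod.mk.injEq, G.adj_comm g'] at hxy ⊢
  tauto

end

/-- no distinct false twins in the modular product of two graphs
with at least two vertices each. -/
theorem no_false_twins_modularProduct {α β : Type*} [Nontrivial α] [Nontrivial β]
    (G : SimpleGraph α) (H : SimpleGraph β) :
    ¬ ∃ x y : α × β, x ≠ y ∧
      (modularProduct G H).neighborSet x = (modularProduct G H).neighborSet y := by
  rintro ⟨⟨g, h⟩, ⟨g', h'⟩, hne, hN⟩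
  by_cases hg : g = g'
  · subst hg
    exact modularProduct_neighborSet_ne_of_snd_ne g (fun hh => hne (congrArg _ hh)) hN
  by_cases hh : h = h'
  · subst hh
    exact modularProduct_neighborSet_ne_of_fst_ne hg h hN
  exact modularProduct_neighborSet_ne_of_ne_of_ne hg hh hN
end

section
/- Let G and H be simple graphs. Vertices (g,h) and (g',h') are twins of the modular product G⋄H (i.e., N_{G⋄H}[(g,h)] = N_{G⋄H}[(g',h')]) if and only if either (i) g and g' are twins of G and h and h' are twins of H, or (ii) {g,g'} is a γ_G-pair and {h,h'} is a γ_H-pair. -/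
open SimpleGraph

lemma self_mem_closedNbr {α : Type*} (G : SimpleGraph α) (v : α) : v ∈ closedNbr G v :=
  Set.mem_insert _ _

lemma mem_closedNbr_iff {α : Type*} (G : SimpleGraph α) (v x : α) :
    x ∈ closedNbr G v ↔ x = v ∨ G.Adj v x := by
  simp [closedNbr]

lemma mem_closedNbr_mod {α β : Type*} (G : SimpleGraph α) (H : SimpleGraph β)
    (g : α) (h : β) (x : α) (y : β) :
    (x, y) ∈ closedNbr (modularProduct G H) (g, h) ↔
      ((x ∈ closedNbr G g ∧ y ∈ closedNbr H h) ∨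
        (x ∉ closedNbr G g ∧ y ∉ closedNbr H h)) := by
  rw [mem_closedNbr_iff (modularProduct G H)]
  simp only [mem_closedNbr_iff, modularProduct, SimpleGraph.fromRel_adj, Prod.mk.injEq, ne_eq]
  constructor
  · rintro (⟨rfl, rfl⟩ | ⟨hne, hrel⟩)
    · exact Or.inl ⟨Or.inl rfl, Or.inl rfl⟩
    · rcases hrel with (⟨e, a⟩ | ⟨a, e⟩ | ⟨a, b⟩ | ⟨n1, n2, na, nb⟩) |
        (⟨e, a⟩ | ⟨a, e⟩ | ⟨a, b⟩ | ⟨n1, n2, na, nb⟩)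
      · exact Or.inl ⟨Or.inl e.symm, Or.inr a⟩
      · exact Or.inl ⟨Or.inr a, Or.inl e.symm⟩
      · exact Or.inl ⟨Or.inr a, Or.inr b⟩
      · exact Or.inr ⟨fun hc => hc.elim (fun e => n1 e.symm) na,
          fun hc => hc.elim (fun e => n2 e.symm) nb⟩
      · exact Or.inl ⟨Or.inl e, Or.inr a.symm⟩
      · exact Or.inl ⟨Or.inr a.symm, Or.inl e⟩
      · exact Or.inl ⟨Or.inr a.symm, Or.inr b.symm⟩
      · exact Or.inr ⟨fun hc => hc.elim n1 (fun ad => na ad.symm),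
          fun hc => hc.elim n2 (fun ad => nb ad.symm)⟩
  · rintro (⟨hx, hy⟩ | ⟨hx, hy⟩)
    · rcases hx with rfl | hx <;> rcases hy with rfl | hy
      · exact Or.inl ⟨rfl, rfl⟩
      · exact Or.inr ⟨fun ⟨_, e⟩ => H.ne_of_adj hy e, Or.inl (Or.inl ⟨rfl, hy⟩)⟩
      · exact Or.inr ⟨fun ⟨e, _⟩ => G.ne_of_adj hx e, Or.inl (Or.inr (Or.inl ⟨hx, rfl⟩))⟩
      · exact Or.inr ⟨fun ⟨e, _⟩ => G.ne_of_adj hx e,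
          Or.inl (Or.inr (Or.inr (Or.inl ⟨hx, hy⟩)))⟩
    · push_neg at hx hy
      refine Or.inr ⟨fun ⟨e, _⟩ => hx.1 e.symm, Or.inl (Or.inr (Or.inr (Or.inr ?_)))⟩
      exact ⟨fun e => hx.1 e.symm, fun e => hy.1 e.symm, hx.2, hy.2⟩

lemma gamma_iff {α : Type*} (G : SimpleGraph α) (g g' : α) :
    gammaPair G g g' ↔ ∀ x, x ∈ closedNbr G g ↔ x ∉ closedNbr G g' := by
  constructor
  · rintro ⟨hi, hu⟩ x
    constructor
    · intro hx hx'
      exact absurd (Set.mem_inter hx hx') (by rw [hi]; exact id)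
    · intro hx'
      rcases Set.eq_univ_iff_forall.mp hu x with hx | hx
      · exact hx
      · exact absurd hx hx'
  · intro hall
    constructor
    · ext x
      simp only [Set.mem_inter_iff, Set.mem_empty_iff_false, iff_false, not_and]
      exact fun h1 => (hall x).mp h1
    · apply Set.eq_univ_iff_forall.mpr
      intro x
      by_cases hx : x ∈ closedNbr G g'
      · exact Or.inr hx
      · exact Or.inl ((hall x).mpr hx)

lemma prop_pos {A A' B B' : Prop}
    (he : (A ∧ B) ∨ (¬A ∧ ¬B) ↔ (A' ∧ B') ∨ (¬A' ∧ ¬B')) (hB : B) (hB' : B') :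
    A ↔ A' := by tauto

lemma prop_neg {A A' B B' : Prop}
    (he : (A ∧ B) ∨ (¬A ∧ ¬B) ↔ (A' ∧ B') ∨ (¬A' ∧ ¬B')) (hB : B) (hB' : ¬B') :
    A ↔ ¬A' := by tauto

lemma prop_pos' {A A' B B' : Prop}
    (he : (A ∧ B) ∨ (¬A ∧ ¬B) ↔ (A' ∧ B') ∨ (¬A' ∧ ¬B')) (hA : A) (hA' : A') :
    B ↔ B' := by tauto

lemma prop_neg' {A A' B B' : Prop}
    (he : (A ∧ B) ∨ (¬A ∧ ¬B) ↔ (A' ∧ B') ∨ (¬A' ∧ ¬B')) (hA : A) (hA' : ¬A') :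
    B ↔ ¬B' := by tauto

lemma prop_back {A A' B B' : Prop} (h1 : A ↔ ¬A') (h2 : B ↔ ¬B') :
    (A ∧ B) ∨ (¬A ∧ ¬B) ↔ (A' ∧ B') ∨ (¬A' ∧ ¬B') := by tauto

/-- characterization of twins in the modular product. -/
theorem twins_modularProduct {α β : Type*} (G : SimpleGraph α) (H : SimpleGraph β)
    (g g' : α) (h h' : β) :
    closedNbr (modularProduct G H) (g, h) = closedNbr (modularProduct G H) (g', h') ↔
      ((closedNbr G g = closedNbr G g' ∧ closedNbr H h = closedNbr H h') ∨
        (gammaPair G g g' ∧ gammaPair H h h')) := by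
  have key : closedNbr (modularProduct G H) (g, h) = closedNbr (modularProduct G H) (g', h') ↔
      ∀ x y, ((x ∈ closedNbr G g ∧ y ∈ closedNbr H h) ∨
        (x ∉ closedNbr G g ∧ y ∉ closedNbr H h)) ↔
        ((x ∈ closedNbr G g' ∧ y ∈ closedNbr H h') ∨
        (x ∉ closedNbr G g' ∧ y ∉ closedNbr H h')) := by
    rw [Set.ext_iff, Prod.forall]
    constructor
    · intro he x y; rw [← mem_closedNbr_mod, ← mem_closedNbr_mod]; exact he x y
    · intro he x y; rw [mem_closedNbr_mod, mem_closedNbr_mod]; exact he x y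
  rw [key]
  constructor
  · intro he
    have hg : g ∈ closedNbr G g := self_mem_closedNbr G g
    have hh : h ∈ closedNbr H h := self_mem_closedNbr H h
    by_cases hB : h ∈ closedNbr H h'
    · left
      have hA : closedNbr G g = closedNbr G g' := by
        ext x; exact prop_pos (he x h) hh hB
      refine ⟨hA, ?_⟩
      have hgA' : g ∈ closedNbr G g' := hA ▸ hg
      ext y
      exact prop_pos' (he g y) hg hgA'
    · right
      have hA : ∀ x, x ∈ closedNbr G g ↔ x ∉ closedNbr G g' := fun x =>
        prop_neg (he x h) hh hB
      have hgA' : g ∉ closedNbr G g' := (hA g).mp hg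
      have hBiff : ∀ y, y ∈ closedNbr H h ↔ y ∉ closedNbr H h' := fun y =>
        prop_neg' (he g y) hg hgA'
      exact ⟨(gamma_iff G g g').mpr hA, (gamma_iff H h h').mpr hBiff⟩
  · rintro (⟨hA, hB⟩ | ⟨hA, hB⟩)
    · intro x y; rw [hA, hB]
    · intro x y
      exact prop_back ((gamma_iff G g g').mp hA x) ((gamma_iff H h h').mp hB y)
end

section
/- Let G and H be simple graphs, neither of which is complete, and suppose it is not the case that both G and H are a disjoint union of two cliques. Then d_{G⋄H}((g,h),(g',h')) = 3 if and only if at least one of the following two conditions holds: (13) N_G[g]=N_G[g'], d_H(h,h') ≥ 3, and (g is universal in G, or {h,h'} is a γ_H-pair); (14) N_H[h]=N_H[h'], d_G(g,g') ≥ 3, and (h is universal in H, or {g,g'} is a γ_G-pair). -/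
open SimpleGraph

/-!
In `G ⋄ H` the closed neighbourhood of `(a, b)` is `{(c, d) | c ∈ N[a] ↔ d ∈ N[b]}`. So
`d((g, h), (g', h')) ≥ 3`, i.e. `N[(g, h)] ∩ N[(g', h')] = ∅`, says that no vertex `a` of `G`
has the same profile `(a ∈ N[g], a ∈ N[g'])` as a vertex `b` of `H` has with respect to
`(h, h')`. Comparing the profiles of `g, g'` with those of `h, h'` turns this into (13) or (14).
Conversely, under (13) a path of length three is built around a witness that `G` is not the
disjoint union of the cliques `N[g]` and `N[g]ᶜ`, or that `H` is not the disjoint union of the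
cliques `N[h]` and `N[h']`; one of the two exists because `G` is not complete, or because `G`
and `H` are not both unions of two cliques.
-/

namespace SimpleGraph

variable {V W : Type*} {G : SimpleGraph V} {G' : SimpleGraph W}

theorem Hom.edist_le (f : G →g G') (u v : V) : G'.edist (f u) (f v) ≤ G.edist u v := by
  by_cases hr : G.Reachable u v
  · obtain ⟨p, hp⟩ := hr.exists_walk_length_eq_edist
    rw [← hp, ← Walk.length_map f]
    exact (p.map f).edist_le
  · exact edist_eq_top_of_not_reachable hr ▸ le_top

theorem Iso.edist_eq (f : G ≃g G') (u v : V) : G'.edist (f u) (f v) = G.edist u v :=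
  le_antisymm (f.toHom.edist_le u v) (by simpa using f.symm.toHom.edist_le (f u) (f v))

end SimpleGraph

section closedNbr

variable {V : Type*} (X : SimpleGraph V) {u v : V}

theorem mem_closedNbr_s3 : v ∈ closedNbr X u ↔ v = u ∨ X.Adj u v := Set.mem_insert_iff

theorem self_mem_closedNbr_s3 (u : V) : u ∈ closedNbr X u := Set.mem_insert u _

theorem mem_closedNbr_comm : v ∈ closedNbr X u ↔ u ∈ closedNbr X v := by
  rw [mem_closedNbr_s3, mem_closedNbr_s3, X.adj_comm, eq_comm]

theorem adj_iff_ne_and_mem_closedNbr : X.Adj u v ↔ u ≠ v ∧ v ∈ closedNbr X u := by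
  rw [mem_closedNbr_s3]
  exact ⟨fun h => ⟨h.ne, Or.inr h⟩, fun ⟨hne, h⟩ => h.resolve_left hne.symm⟩

theorem edist_le_one_iff_mem_closedNbr : X.edist u v ≤ 1 ↔ v ∈ closedNbr X u := by
  rw [edist_le_one_iff_adj_or_eq, mem_closedNbr_s3, eq_comm, or_comm]

theorem three_le_edist_iff_disjoint_closedNbr :
    3 ≤ X.edist u v ↔ Disjoint (closedNbr X u) (closedNbr X v) := by
  rw [Set.disjoint_left]
  constructor
  · intro h3 w hu hv
    have : X.edist u v ≤ 1 + 1 :=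
      (X.edist_triangle (v := w)).trans <| add_le_add
        ((edist_le_one_iff_mem_closedNbr X).2 hu)
        ((edist_le_one_iff_mem_closedNbr X).2 ((mem_closedNbr_comm X).1 hv))
    exact absurd (h3.trans this) (by norm_num)
  · intro hdisj
    refine Order.add_one_le_of_lt (two_lt_edist_iff.2 ⟨?_, ?_, ?_⟩)
    · rintro rfl
      exact hdisj (self_mem_closedNbr_s3 X u) (self_mem_closedNbr_s3 X u)
    · intro hadj
      exact hdisj ((mem_closedNbr_s3 X).2 (Or.inr hadj)) (self_mem_closedNbr_s3 X v)
    · refine Set.eq_empty_of_forall_notMem fun w hw => ?_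
      rw [mem_commonNeighbors] at hw
      exact hdisj ((mem_closedNbr_s3 X).2 (Or.inr hw.1)) ((mem_closedNbr_s3 X).2 (Or.inr hw.2))

theorem edist_le_three_of_mem_closedNbr {x y : V} (hx : x ∈ closedNbr X u)
    (hy : y ∈ closedNbr X x) (hv : v ∈ closedNbr X y) : X.edist u v ≤ 3 :=
  calc X.edist u v ≤ X.edist u x + X.edist x y + X.edist y v :=
        X.edist_triangle.trans (by gcongr; exact X.edist_triangle)
    _ ≤ 1 + 1 + 1 := by
        gcongr <;> exact (edist_le_one_iff_mem_closedNbr X).2 ‹_›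
    _ = 3 := by norm_num

end closedNbr

section modularProduct

variable {α β : Type*} (G : SimpleGraph α) (H : SimpleGraph β)

theorem mem_closedNbr_modularProduct {a c : α} {b d : β} :
    (c, d) ∈ closedNbr (modularProduct G H) (a, b) ↔
      (c ∈ closedNbr G a ↔ d ∈ closedNbr H b) := by
  simp only [mem_closedNbr_s3, modularProduct, fromRel_adj, Prod.mk.injEq, ne_eq]
  by_cases hca : c = a <;> by_cases hdb : d = b <;>
    by_cases hG : G.Adj a c <;> by_cases hH : H.Adj b d <;>
    simp_all [G.adj_comm c a, H.adj_comm d b, eq_comm]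

def modularProductComm : modularProduct G H ≃g modularProduct H G where
  toEquiv := Equiv.prodComm α β
  map_rel_iff' {x y} := by
    obtain ⟨a, b⟩ := x
    obtain ⟨c, d⟩ := y
    rw [adj_iff_ne_and_mem_closedNbr, adj_iff_ne_and_mem_closedNbr]
    simp only [Equiv.prodComm_apply, Prod.swap_prod_mk, ne_eq, Prod.mk.injEq,
      mem_closedNbr_modularProduct]
    exact and_congr (not_congr and_comm) iff_comm

theorem edist_modularProduct_comm {g g' : α} {h h' : β} :
    (modularProduct H G).edist (h, g) (h', g') = (modularProduct G H).edist (g, h) (g', h') :=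
  (modularProductComm G H).edist_eq (g, h) (g', h')

end modularProduct

section distThree

variable {α β : Type*} (G : SimpleGraph α) (H : SimpleGraph β) {g g' : α} {h h' : β}

/-- Condition (13); condition (14) is `DistThreeCondition H G h h' g g'`. -/
def DistThreeCondition (g g' : α) (h h' : β) : Prop :=
  closedNbr G g = closedNbr G g' ∧ 3 ≤ H.edist h h' ∧
    (_root_.IsUniversal G g ∨ gammaPair H h h')

theorem three_le_edist_modularProduct_iff_forall :
    3 ≤ (modularProduct G H).edist (g, h) (g', h') ↔
      ∀ a b, ¬((a ∈ closedNbr G g ↔ b ∈ closedNbr H h) ∧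
        (a ∈ closedNbr G g' ↔ b ∈ closedNbr H h')) := by
  simp only [three_le_edist_iff_disjoint_closedNbr, Set.disjoint_left, Prod.forall,
    mem_closedNbr_modularProduct, not_and]

variable {G H}

theorem distThreeCondition_of_three_le_edist
    (hd : 3 ≤ (modularProduct G H).edist (g, h) (g', h')) (hg : g' ∈ closedNbr G g) :
    DistThreeCondition G H g g' h h' := by
  rw [three_le_edist_modularProduct_iff_forall] at hd
  have hdisj : Disjoint (closedNbr H h) (closedNbr H h') :=
    Set.disjoint_left.2 fun b hb hb' => hd g b
      ⟨iff_of_true (self_mem_closedNbr_s3 G g) hb, iff_of_true ((mem_closedNbr_comm G).1 hg) hb'⟩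
  have hh : h' ∉ closedNbr H h := hdisj.notMem_of_mem_right (self_mem_closedNbr_s3 H h')
  have hh' : h ∉ closedNbr H h' := hdisj.notMem_of_mem_left (self_mem_closedNbr_s3 H h)
  have hN : closedNbr G g = closedNbr G g' := by
    ext a
    constructor
    · intro ha
      by_contra ha'
      exact hd a h ⟨iff_of_true ha (self_mem_closedNbr_s3 H h), iff_of_false ha' hh'⟩
    · intro ha'
      by_contra ha
      exact hd a h' ⟨iff_of_false ha hh, iff_of_true ha' (self_mem_closedNbr_s3 H h')⟩
  refine ⟨hN, (three_le_edist_iff_disjoint_closedNbr H).2 hdisj,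
    or_iff_not_imp_left.2 fun hu => ?_⟩
  obtain ⟨a, ha⟩ := (Set.ne_univ_iff_exists_notMem _).1 hu
  refine ⟨Set.disjoint_iff_inter_eq_empty.1 hdisj, Set.eq_univ_of_forall fun b => ?_⟩
  by_contra hb
  rw [Set.mem_union, not_or] at hb
  exact hd a b ⟨iff_of_false ha hb.1, iff_of_false (hN ▸ ha) hb.2⟩

theorem three_le_edist_of_distThreeCondition (hc : DistThreeCondition G H g g' h h') :
    3 ≤ (modularProduct G H).edist (g, h) (g', h') := by
  obtain ⟨hN, hd, hcov⟩ := hc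
  rw [three_le_edist_modularProduct_iff_forall, ← hN]
  rw [three_le_edist_iff_disjoint_closedNbr, Set.disjoint_left] at hd
  rintro a b ⟨hb, hb'⟩
  by_cases ha : a ∈ closedNbr G g
  · exact hd (hb.1 ha) (hb'.1 ha)
  obtain hu | ⟨-, hcup⟩ := hcov
  · exact ha (hu ▸ Set.mem_univ a)
  · obtain h1 | h2 : b ∈ closedNbr H h ∪ closedNbr H h' := hcup ▸ Set.mem_univ b
    exacts [ha (hb.2 h1), ha (hb'.2 h2)]

theorem three_le_edist_modularProduct_iff :
    3 ≤ (modularProduct G H).edist (g, h) (g', h') ↔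
      DistThreeCondition G H g g' h h' ∨ DistThreeCondition H G h h' g g' := by
  constructor
  · intro hd
    by_cases hg : g' ∈ closedNbr G g
    · exact Or.inl (distThreeCondition_of_three_le_edist hd hg)
    · refine Or.inr (distThreeCondition_of_three_le_edist ?_ ?_)
      · rwa [edist_modularProduct_comm]
      · by_contra hh
        exact (three_le_edist_modularProduct_iff_forall G H).1 hd g' h'
          ⟨iff_of_false hg hh, iff_of_true (self_mem_closedNbr_s3 G g') (self_mem_closedNbr_s3 H h')⟩
  · rintro (hc | hc)
    · exact three_le_edist_of_distThreeCondition hc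
    · rw [← edist_modularProduct_comm]
      exact three_le_edist_of_distThreeCondition hc

end distThree

section cliqueSplit

variable {V : Type*} {X : SimpleGraph V} {S : Set V}

/-- `X` is the disjoint union of the complete graphs on `S` and on `Sᶜ`. -/
def IsCliqueSplit (X : SimpleGraph V) (S : Set V) : Prop :=
  ∀ u v, v ∈ closedNbr X u ↔ (u ∈ S ↔ v ∈ S)

theorem IsCliqueSplit.twoCliques (hX : IsCliqueSplit X S) (hS : S.Nonempty)
    (hS' : Sᶜ.Nonempty) : TwoCliques X := by
  have adj {u v : V} (huv : u ≠ v) (h : u ∈ S ↔ v ∈ S) : X.Adj u v :=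
    (adj_iff_ne_and_mem_closedNbr X).2 ⟨huv, (hX u v).2 h⟩
  refine ⟨S, Sᶜ, hS, hS', Set.union_compl_self S, Set.inter_compl_self S,
    fun u hu v hv huv => adj huv (iff_of_true hu hv),
    fun u hu v hv huv => adj huv (iff_of_false hu hv), fun u hu v hv hadj => ?_⟩
  exact hv ((hX u v).1 ((mem_closedNbr_s3 X).2 (Or.inr hadj)) |>.1 hu)

theorem not_isCliqueSplit_univ (hX : ¬IsCompleteGraph X) : ¬IsCliqueSplit X Set.univ := by
  intro hS
  refine hX fun u v huv => (adj_iff_ne_and_mem_closedNbr X).2 ⟨huv, ?_⟩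
  simpa using hS u v

end cliqueSplit

section paths

variable {α β : Type*} {G : SimpleGraph α} {H : SimpleGraph β} {g g' : α} {h h' : β}

theorem edist_modularProduct_le_three_of_not_isCliqueSplit_left
    (hN : closedNbr G g = closedNbr G g') (hh : h' ∉ closedNbr H h)
    (hG : ¬IsCliqueSplit G (closedNbr G g)) :
    (modularProduct G H).edist (g, h) (g', h') ≤ 3 := by
  classical
  have hh' : h ∉ closedNbr H h' := fun h1 => hh ((mem_closedNbr_comm H).1 h1)
  have hg' (v : α) : g' ∈ closedNbr G v ↔ v ∈ closedNbr G g := by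
    rw [mem_closedNbr_comm, hN]
  obtain ⟨u, v, huv⟩ :
      ∃ u v, ¬(v ∈ closedNbr G u ↔ (u ∈ closedNbr G g ↔ v ∈ closedNbr G g)) := by
    simpa [IsCliqueSplit] using hG
  -- The second coordinates, taken from `h, h'`, make the first and last steps edges; the middle
  -- step is then an edge exactly because `u, v` violate the split.
  refine edist_le_three_of_mem_closedNbr _
    (x := (u, if u ∈ closedNbr G g then h else h'))
    (y := (v, if v ∈ closedNbr G g then h' else h)) ?_ ?_ ?_ <;>
  by_cases hu : u ∈ closedNbr G g <;> by_cases hv : v ∈ closedNbr G g <;>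
  simp [mem_closedNbr_modularProduct, hu, hv, hg', self_mem_closedNbr_s3, hh, hh'] at huv ⊢
    <;> tauto

theorem edist_modularProduct_le_three_of_not_isCliqueSplit_right
    (hN : closedNbr G g = closedNbr G g') {a₀ : α} (ha₀ : a₀ ∉ closedNbr G g)
    (hγ : gammaPair H h h') (hH : ¬IsCliqueSplit H (closedNbr H h)) :
    (modularProduct G H).edist (g, h) (g', h') ≤ 3 := by
  classical
  have hh' (v : β) : h' ∈ closedNbr H v ↔ v ∉ closedNbr H h := by
    rw [mem_closedNbr_comm]
    have hv : v ∈ closedNbr H h ∪ closedNbr H h' := hγ.2 ▸ Set.mem_univ v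
    exact ⟨fun h1 h0 => (hγ.1 ▸ ⟨h0, h1⟩ : v ∈ (∅ : Set β)), hv.resolve_left⟩
  have hg : g' ∈ closedNbr G g := hN ▸ self_mem_closedNbr_s3 G g'
  have hg' : g' ∉ closedNbr G a₀ := fun h1 => ha₀ (hN ▸ (mem_closedNbr_comm G).1 h1)
  obtain ⟨u, v, huv⟩ :
      ∃ u v, ¬(v ∈ closedNbr H u ↔ (u ∈ closedNbr H h ↔ v ∈ closedNbr H h)) := by
    simpa [IsCliqueSplit] using hH
  -- As in the previous lemma, now with first coordinates taken from `g, g', a₀`.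
  refine edist_le_three_of_mem_closedNbr _
    (x := (if u ∈ closedNbr H h then g else a₀, u))
    (y := (if v ∈ closedNbr H h then a₀ else g', v)) ?_ ?_ ?_ <;>
  by_cases hu : u ∈ closedNbr H h <;> by_cases hv : v ∈ closedNbr H h <;>
  simp [mem_closedNbr_modularProduct, hu, hv, hh', self_mem_closedNbr_s3, ha₀, hg, hg'] at huv ⊢
    <;> tauto

theorem edist_modularProduct_le_three (hG : ¬IsCompleteGraph G)
    (hGH : ¬(TwoCliques G ∧ TwoCliques H)) (hc : DistThreeCondition G H g g' h h') :
    (modularProduct G H).edist (g, h) (g', h') ≤ 3 := by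
  obtain ⟨hN, hd, hcov⟩ := hc
  have hh : h' ∉ closedNbr H h :=
    ((three_le_edist_iff_disjoint_closedNbr H).1 hd).notMem_of_mem_right (self_mem_closedNbr_s3 H h')
  by_cases hu : _root_.IsUniversal G g
  · exact edist_modularProduct_le_three_of_not_isCliqueSplit_left hN hh
      (hu ▸ not_isCliqueSplit_univ hG)
  obtain ⟨a₀, ha₀⟩ := (Set.ne_univ_iff_exists_notMem _).1 hu
  have hγ := hcov.resolve_left hu
  rcases not_and_or.1 hGH with hG₂ | hH₂
  · exact edist_modularProduct_le_three_of_not_isCliqueSplit_left hN hh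
      fun hS => hG₂ (hS.twoCliques ⟨g, self_mem_closedNbr_s3 G g⟩ ⟨a₀, ha₀⟩)
  · exact edist_modularProduct_le_three_of_not_isCliqueSplit_right hN ha₀ hγ
      fun hS => hH₂ (hS.twoCliques ⟨h, self_mem_closedNbr_s3 H h⟩ ⟨h', hh⟩)

end paths

/-- characterization of distance three in the modular product. -/
theorem modularProduct_dist_eq_three {α β : Type*} (G : SimpleGraph α) (H : SimpleGraph β)
    (hG : ¬ IsCompleteGraph G) (hH : ¬ IsCompleteGraph H)
    (hGH : ¬ (TwoCliques G ∧ TwoCliques H)) (g g' : α) (h h' : β) :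
    (modularProduct G H).edist (g, h) (g', h') = 3 ↔
      ((closedNbr G g = closedNbr G g' ∧ 3 ≤ H.edist h h' ∧
        (_root_.IsUniversal G g ∨ gammaPair H h h')) ∨
       (closedNbr H h = closedNbr H h' ∧ 3 ≤ G.edist g g' ∧
        (_root_.IsUniversal H h ∨ gammaPair G g g'))) := by
  change _ ↔ DistThreeCondition G H g g' h h' ∨ DistThreeCondition H G h h' g g'
  rw [← three_le_edist_modularProduct_iff]
  refine ⟨fun hd => hd.ge, fun hd => le_antisymm ?_ hd⟩
  rcases three_le_edist_modularProduct_iff.1 hd with hc | hc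
  · exact edist_modularProduct_le_three hG hGH hc
  · rw [← edist_modularProduct_comm]
    exact edist_modularProduct_le_three hH (fun ⟨hH₂, hG₂⟩ => hGH ⟨hG₂, hH₂⟩) hc
end

section
/- Let X be a connected graph of diameter two. Then distinct vertices u and v of X are mutually maximally distant in X (equivalently, uv is an edge of the strong resolving graph X_SR) if and only if d_X(u,v)=2 or N_X[u]=N_X[v]. -/
open SimpleGraph

/-- in a connected graph of diameter two, two distinct vertices are
mutually maximally distant iff they are at distance two or are twins. -/
theorem mmd_of_diam_two {α : Type*} (X : SimpleGraph α) (hc : X.Connected)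
    (hd : X.ediam = 2) (u v : α) (huv : u ≠ v) :
    MMD X u v ↔ X.edist u v = 2 ∨ closedNbr X u = closedNbr X v := by
  have hle : ∀ a b : α, X.edist a b ≤ 2 := fun a b => hd ▸ X.edist_le_ediam
  have hpos : X.edist u v ≠ 0 := fun h => huv (edist_eq_zero_iff.mp h)
  have hmem : ∀ a b : α, a ∈ closedNbr X b ↔ (a = b ∨ X.Adj b a) := by
    intro a b; simp [closedNbr, SimpleGraph.mem_neighborSet]
  constructor
  · intro ⟨h1, h2⟩
    rcases eq_or_ne (X.edist u v) 2 with he | hne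
    · exact Or.inl he
    · have he1 : X.edist u v = 1 := by
        have h2 := hle u v
        cases e : X.edist u v with
        | top => rw [e] at h2; simp at h2
        | coe n =>
          rw [e] at h2 hne hpos
          have hn : n ≤ 2 := by exact_mod_cast h2
          interval_cases n <;> simp_all
      have hadj : X.Adj u v := edist_eq_one_iff_adj.mp he1
      right
      ext w
      have key : ∀ {a b : α}, X.edist a b ≤ 1 → a = b ∨ X.Adj a b := by
        intro a b h
        rcases eq_or_ne a b with rfl | hab
        · exact Or.inl rfl
        · right
          have : X.edist a b ≠ 0 := fun h0 => hab (edist_eq_zero_iff.mp h0)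
          exact edist_eq_one_iff_adj.mp (le_antisymm h (ENat.one_le_iff_ne_zero.mpr this))
      rw [hmem, hmem]
      constructor
      · rintro (rfl | hw)
        · exact Or.inr hadj.symm
        · rcases key (he1 ▸ h1 w hw) with rfl | h
          · exact Or.inl rfl
          · exact Or.inr h.symm
      · rintro (rfl | hw)
        · exact Or.inr hadj
        · rcases key (he1 ▸ h2 w hw) with rfl | h
          · exact Or.inl rfl
          · exact Or.inr h.symm
  · rintro (he | hN)
    · exact ⟨fun w _ => he ▸ hle w v, fun w _ => he ▸ hle w u⟩
    · have hadj : X.Adj u v := by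
        have : u ∈ closedNbr X v := hN ▸ (hmem u u).mpr (Or.inl rfl)
        rcases (hmem u v).mp this with rfl | h
        · exact absurd rfl huv
        · exact h.symm
      have he1 : X.edist u v = 1 := edist_eq_one_iff_adj.mpr hadj
      constructor
      · intro w hw
        have : w ∈ closedNbr X v := hN ▸ (hmem w u).mpr (Or.inr hw)
        rcases (hmem w v).mp this with rfl | h
        · simp [he1]
        · rw [he1]; exact le_of_eq (edist_eq_one_iff_adj.mpr h.symm)
      · intro w hw
        have : w ∈ closedNbr X u := hN ▸ (hmem w v).mpr (Or.inr hw)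
        rcases (hmem w u).mp this with rfl | h
        · simp [he1]
        · rw [he1]; exact le_of_eq (edist_eq_one_iff_adj.mpr h.symm)
end

section
/- Let G be a connected graph. Distinct vertices u and v of G are twins (N_G[u]=N_G[v]) if and only if u and v are adjacent in G and u and v are mutually maximally distant in G (i.e., uv ∈ E(G) ∩ E(G_SR)). -/
open SimpleGraph

/-- distinct vertices are twins iff they are adjacent and mutually
maximally distant. -/
theorem twins_iff_adj_and_mmd {α : Type*} (G : SimpleGraph α) (hc : G.Connected)
    (u v : α) (huv : u ≠ v) :
    closedNbr G u = closedNbr G v ↔ G.Adj u v ∧ MMD G u v := by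
  have key : ∀ w x : α, G.edist w x ≤ 1 ↔ (w = x ∨ G.Adj w x) := by
    intro w x
    constructor
    · intro h
      rcases eq_or_ne w x with rfl | hne
      · exact Or.inl rfl
      · refine Or.inr (edist_eq_one_iff_adj.mp (le_antisymm h ?_))
        exact ENat.one_le_iff_ne_zero.mpr (edist_eq_zero_iff.ne.mpr hne)
    · rintro (rfl | h)
      · simp
      · exact le_of_eq (edist_eq_one_iff_adj.mpr h)
  constructor
  · intro h
    have hadj : G.Adj u v := by
      have : u ∈ closedNbr G v := h ▸ Set.mem_insert u _
      rcases this with h1 | h1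
      · exact absurd h1 huv
      · exact (G.mem_neighborSet v u).mp h1 |>.symm
    refine ⟨hadj, ?_, ?_⟩
    · intro w hw
      rw [edist_eq_one_iff_adj.mpr hadj, key]
      have : w ∈ closedNbr G v := h ▸ Set.mem_insert_of_mem _ ((G.mem_neighborSet u w).mpr hw)
      rcases this with h1 | h1
      · exact Or.inl h1
      · exact Or.inr ((G.mem_neighborSet v w).mp h1).symm
    · intro w hw
      rw [SimpleGraph.edist_comm, edist_eq_one_iff_adj.mpr hadj, key]
      have : w ∈ closedNbr G u := h ▸ Set.mem_insert_of_mem _ ((G.mem_neighborSet v w).mpr hw)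
      rcases this with h1 | h1
      · exact Or.inl h1.symm
      · exact Or.inr ((G.mem_neighborSet u w).mp h1)
  · rintro ⟨hadj, h1, h2⟩
    have he : G.edist u v = 1 := edist_eq_one_iff_adj.mpr hadj
    ext w
    simp only [closedNbr, Set.mem_insert_iff, mem_neighborSet]
    constructor
    · rintro (rfl | hw)
      · exact Or.inr hadj.symm
      · have := h1 w hw
        rw [he, key] at this
        rcases this with rfl | hwv
        · exact Or.inl rfl
        · exact Or.inr hwv.symm
    · rintro (rfl | hw)
      · exact Or.inr hadj
      · have := h2 w hw
        rw [SimpleGraph.edist_comm, he, key] at this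
        rcases this with rfl | hwu
        · exact Or.inl rfl
        · exact Or.inr hwu
end
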